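/- Let H be a 3-regular, triangle-free finite simple graph containing a copy of K_{2,3} with parts {x, y, z} and {u, v} (so xu, xv, yu, yv, zu, zv are edges of H). If H − {u,v} admits an injective edge-coloring with 7 colors, then H admits an injective edge-coloring with 7 colors. -/

import Mathlib

/-!
In a triangle-free graph conflicting edges are at distance one, and for two edges avoiding `u`
and `v` this is witnessed inside `H - {u, v}`; so the given coloring stays valid on these old
edges. Each new edge `wu`, `wv` (`w ∈ {x, y, z}`) gets a color `κ w` depending only on `w`, with
`κ x`, `κ y`, `κ z` distinct; two new edges of equal color share `w` and do not conflict. Since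
`N(u) = N(v) = {x, y, z}` and `H` is cubic, an old edge conflicting with `xu` or `xv` is `yy'`,
`zz'` or one of the two other edges at `x'`, where `w'` is the neighbor of `w` outside `{u, v}`.
So at most four colors are forbidden for `κ x`, and likewise for `κ y` and `κ z`; choosing them
greedily needs only `4 + 2 < 7` colors.
-/

open SimpleGraph

/-- Two distinct edges of `G` *conflict* if they are at distance exactly 1 in `G`
(they share no endpoint but some endpoint of one is adjacent to some endpoint of the
other), or they lie in a common triangle of `G`. -/
def EdgeConflict {V : Type*} (G : SimpleGraph V) (e₁ e₂ : Sym2 V) : Prop :=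
  e₁ ≠ e₂ ∧
    (((∀ u ∈ e₁, u ∉ e₂) ∧ ∃ u ∈ e₁, ∃ v ∈ e₂, G.Adj u v) ∨
      (∃ a b c : V, G.Adj a b ∧ G.Adj b c ∧ G.Adj a c ∧
        e₁ ∈ ({s(a, b), s(b, c), s(a, c)} : Set (Sym2 V)) ∧
        e₂ ∈ ({s(a, b), s(b, c), s(a, c)} : Set (Sym2 V))))

/-- An injective edge-coloring of `G` with `k` colors. -/
def IsInjEdgeColoring {V : Type*} (G : SimpleGraph V) {k : ℕ} (f : Sym2 V → Fin k) : Prop :=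
  ∀ e₁ ∈ G.edgeSet, ∀ e₂ ∈ G.edgeSet, EdgeConflict G e₁ e₂ → f e₁ ≠ f e₂

/-- The injective chromatic index of `G`. -/
noncomputable def injChromIndex {V : Type*} (G : SimpleGraph V) : ℕ :=
  sInf {k : ℕ | ∃ f : Sym2 V → Fin k, IsInjEdgeColoring G f}

open Finset

section

variable {V W : Type*} {G : SimpleGraph V}

theorem EdgeConflict.symm {e₁ e₂ : Sym2 V} (h : EdgeConflict G e₁ e₂) : EdgeConflict G e₂ e₁ := by
  obtain ⟨hne, ⟨hdisj, a, ha, b, hb, hab⟩ | ⟨a, b, c, hab, hbc, hac, h₁, h₂⟩⟩ := h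
  · exact ⟨hne.symm, .inl ⟨fun c hc hc' => hdisj c hc' hc, b, hb, a, ha, hab.symm⟩⟩
  · exact ⟨hne.symm, .inr ⟨a, b, c, hab, hbc, hac, h₂, h₁⟩⟩

theorem EdgeConflict.disjoint_adj_of_cliqueFree (hG : G.CliqueFree 3) {e₁ e₂ : Sym2 V}
    (h : EdgeConflict G e₁ e₂) : (∀ a ∈ e₁, a ∉ e₂) ∧ ∃ a ∈ e₁, ∃ b ∈ e₂, G.Adj a b := by
  classical
  obtain ⟨-, h | ⟨a, b, c, hab, hbc, hac, -⟩⟩ := h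
  · exact h
  · exact (hG {a, b, c} (is3Clique_triple_iff.mpr ⟨hab, hac, hbc⟩)).elim

theorem EdgeConflict.of_map_embedding {G' : SimpleGraph W} (hG : G.CliqueFree 3) (φ : G' ↪g G)
    {e₁ e₂ : Sym2 W} (h : EdgeConflict G (e₁.map φ) (e₂.map φ)) : EdgeConflict G' e₁ e₂ := by
  obtain ⟨hdisj, a, ha, b, hb, hab⟩ := h.disjoint_adj_of_cliqueFree hG
  obtain ⟨a', ha', rfl⟩ := Sym2.mem_map.mp ha
  obtain ⟨b', hb', rfl⟩ := Sym2.mem_map.mp hb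
  refine ⟨fun he => h.1 (he ▸ rfl), .inl ⟨fun c hc₁ hc₂ => ?_, a', ha', b', hb', ?_⟩⟩
  · exact hdisj (φ c) (Sym2.mem_map.mpr ⟨c, hc₁, rfl⟩) (Sym2.mem_map.mpr ⟨c, hc₂, rfl⟩)
  · exact φ.map_adj_iff.mp hab

open Classical in
theorem IsInjEdgeColoring.extend_of_induce_compl {k : ℕ} (hG : G.CliqueFree 3) {T : Set V}
    {F g : Sym2 V → Fin k} (hF : IsInjEdgeColoring (G.induce Tᶜ) (F ∘ Sym2.map (↑)))
    (hnew : ∀ e₁ ∈ G.edgeSet, ∀ e₂ ∈ G.edgeSet, (∃ a ∈ e₁, a ∈ T) → (∃ a ∈ e₂, a ∈ T) →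
      EdgeConflict G e₁ e₂ → g e₁ ≠ g e₂)
    (hmix : ∀ e₁ ∈ G.edgeSet, ∀ e₂ ∈ G.edgeSet, (∃ a ∈ e₁, a ∈ T) → (∀ a ∈ e₂, a ∉ T) →
      EdgeConflict G e₁ e₂ → g e₁ ≠ F e₂) :
    IsInjEdgeColoring G fun e => if ∃ a ∈ e, a ∈ T then g e else F e := by
  intro e₁ he₁ e₂ he₂ hconf
  dsimp only
  split_ifs with h₁ h₂ h₂
  · exact hnew e₁ he₁ e₂ he₂ h₁ h₂ hconf
  · exact hmix e₁ he₁ e₂ he₂ h₁ (by simpa using h₂) hconf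
  · exact (hmix e₂ he₂ e₁ he₁ h₂ (by simpa using h₁) hconf.symm).symm
  · push Not at h₁ h₂
    obtain ⟨e₁, rfl⟩ : ∃ e : Sym2 ↥Tᶜ, e.map (↑) = e₁ := ⟨_, Sym2.attachWith_map_subtypeVal h₁⟩
    obtain ⟨e₂, rfl⟩ : ∃ e : Sym2 ↥Tᶜ, e.map (↑) = e₂ := ⟨_, Sym2.attachWith_map_subtypeVal h₂⟩
    let ι : G.induce Tᶜ ↪g G := Embedding.induce Tᶜ
    exact hF _ (ι.map_mem_edgeSet_iff.mp he₁) _ (ι.map_mem_edgeSet_iff.mp he₂)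
      (hconf.of_map_embedding hG ι)

theorem exists_adj_of_mem_edgeSet {e : Sym2 V} {a : V} (he : e ∈ G.edgeSet) (ha : a ∈ e) :
    ∃ b, G.Adj a b ∧ e = s(a, b) := by
  obtain ⟨b, rfl⟩ := Sym2.mem_iff_exists.mp ha
  exact ⟨b, he, rfl⟩

theorem eq_or_eq_of_mem_edgeSet {a b c d : V} (hN : ∀ s, G.Adj a s → s = b ∨ s = c ∨ s = d)
    {e : Sym2 V} (he : e ∈ G.edgeSet) (ha : a ∈ e) (hb : b ∉ e) : e = s(a, c) ∨ e = s(a, d) := by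
  obtain ⟨s, hs, rfl⟩ := exists_adj_of_mem_edgeSet he ha
  rcases hN s hs with rfl | rfl | rfl
  · exact absurd (by simp) hb
  all_goals simp

section DegreeThree

variable {w p q r s : V} [Fintype (G.neighborSet w)] (hw : G.degree w = 3)
include hw

theorem exists_eq_or_eq_of_degree_eq_three (hp : G.Adj w p) :
    ∃ a b, ∀ s, G.Adj w s → s = p ∨ s = a ∨ s = b := by
  classical
  have : #((G.neighborFinset w).erase p) = 2 := by
    rw [card_erase_of_mem (by simpa), card_neighborFinset_eq_degree, hw]
  obtain ⟨a, b, -, hab⟩ := card_eq_two.mp this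
  refine ⟨a, b, fun s hs => or_iff_not_imp_left.2 fun hsp => ?_⟩
  simpa [hab] using (show s ∈ (G.neighborFinset w).erase p by simp [hsp, hs])

theorem exists_adj_eq_or_eq_or_eq_of_degree_eq_three (hpq : p ≠ q) (hp : G.Adj w p)
    (hq : G.Adj w q) : ∃ t, G.Adj w t ∧ ∀ s, G.Adj w s → s = p ∨ s = q ∨ s = t := by
  classical
  have : #(((G.neighborFinset w).erase p).erase q) = 1 := by
    rw [card_erase_of_mem (by simp [hq, hpq.symm]), card_erase_of_mem (by simpa),
      card_neighborFinset_eq_degree, hw]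
  obtain ⟨t, ht⟩ := card_eq_one.mp this
  have htN : t ∈ ((G.neighborFinset w).erase p).erase q := ht ▸ mem_singleton_self t
  simp only [mem_erase, mem_neighborFinset] at htN
  refine ⟨t, htN.2.2, fun s hs => or_iff_not_imp_left.2 fun hsp =>
    or_iff_not_imp_left.2 fun hsq => ?_⟩
  simpa [ht] using (show s ∈ ((G.neighborFinset w).erase p).erase q by simp [hsp, hsq, hs])

theorem eq_or_eq_or_eq_of_degree_eq_three (hpq : p ≠ q) (hpr : p ≠ r) (hqr : q ≠ r)
    (hp : G.Adj w p) (hq : G.Adj w q) (hr : G.Adj w r) (hs : G.Adj w s) :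
    s = p ∨ s = q ∨ s = r := by
  obtain ⟨t, -, ht⟩ := exists_adj_eq_or_eq_or_eq_of_degree_eq_three hw hpq hp hq
  obtain rfl : r = t := by grind
  exact ht s hs

end DegreeThree

theorem exists_three_distinct_notMem {α : Type*} [Fintype α] [DecidableEq α] {A B C : Finset α}
    (hA : #A + 1 ≤ Fintype.card α) (hB : #B + 2 ≤ Fintype.card α)
    (hC : #C + 3 ≤ Fintype.card α) :
    ∃ a b c, a ∉ A ∧ b ∉ B ∧ c ∉ C ∧ a ≠ b ∧ a ≠ c ∧ b ≠ c := by
  have hex : ∀ D : Finset α, #D < Fintype.card α → ∃ d, d ∉ D := fun D hD => by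
    obtain ⟨d, -, hd⟩ := exists_mem_notMem_of_card_lt_card (t := univ) (by simpa using hD)
    exact ⟨d, hd⟩
  obtain ⟨a, ha⟩ := hex A (by omega)
  obtain ⟨b, hb⟩ := hex (insert a B) (by grind [card_insert_le])
  obtain ⟨c, hc⟩ := hex (insert a (insert b C)) (by grind [card_insert_le])
  simp only [mem_insert, not_or] at hb hc
  exact ⟨a, b, c, ha, hb.2, hc.2.2, Ne.symm hb.1, Ne.symm hc.1, Ne.symm hc.2.1⟩

theorem ite_mem_ne_ite_mem {α β : Type*} [DecidableEq α] {x y z : α} {a b c : β}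
    (hab : a ≠ b) (hac : a ≠ c) (hbc : b ≠ c) {e₁ e₂ : Sym2 α}
    (h₁ : x ∈ e₁ ∨ y ∈ e₁ ∨ z ∈ e₁) (h₂ : x ∈ e₂ ∨ y ∈ e₂ ∨ z ∈ e₂)
    (hdisj : ∀ w ∈ e₁, w ∉ e₂) :
    (if x ∈ e₁ then a else if y ∈ e₁ then b else c) ≠
      (if x ∈ e₂ then a else if y ∈ e₂ then b else c) := by
  grind

structure IsK23 (G : SimpleGraph V) (x y z u v : V) : Prop where
  x_ne_y : x ≠ y
  x_ne_z : x ≠ z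
  y_ne_z : y ≠ z
  u_ne_v : u ≠ v
  adj_xu : G.Adj x u
  adj_xv : G.Adj x v
  adj_yu : G.Adj y u
  adj_yv : G.Adj y v
  adj_zu : G.Adj z u
  adj_zv : G.Adj z v

namespace IsK23

variable {x y z u v : V} (h : IsK23 G x y z u v)
include h

theorem swap : IsK23 G y x z u v :=
  ⟨h.x_ne_y.symm, h.y_ne_z, h.x_ne_z, h.u_ne_v, h.adj_yu, h.adj_yv, h.adj_xu, h.adj_xv,
    h.adj_zu, h.adj_zv⟩

theorem rotate : IsK23 G z x y u v :=
  ⟨h.x_ne_z.symm, h.y_ne_z.symm, h.x_ne_y, h.u_ne_v, h.adj_zu, h.adj_zv, h.adj_xu, h.adj_xv,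
    h.adj_yu, h.adj_yv⟩

variable [Fintype V] [DecidableRel G.Adj]

theorem eq_or_eq_or_eq_of_adj (hu : G.degree u = 3) (hv : G.degree v = 3) {t s : V}
    (ht : t ∈ ({u, v} : Set V)) (hs : G.Adj t s) : s = x ∨ s = y ∨ s = z := by
  rcases ht with rfl | rfl
  · exact eq_or_eq_or_eq_of_degree_eq_three hu h.x_ne_y h.x_ne_z h.y_ne_z h.adj_xu.symm
      h.adj_yu.symm h.adj_zu.symm hs
  · exact eq_or_eq_or_eq_of_degree_eq_three hv h.x_ne_y h.x_ne_z h.y_ne_z h.adj_xv.symm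
      h.adj_yv.symm h.adj_zv.symm hs

theorem mem_or_mem_or_mem_of_mem_edgeSet (hu : G.degree u = 3) (hv : G.degree v = 3) ⦃e : Sym2 V⦄
    (he : e ∈ G.edgeSet) (hnew : ∃ a ∈ e, a ∈ ({u, v} : Set V)) : x ∈ e ∨ y ∈ e ∨ z ∈ e := by
  obtain ⟨t, ht, htuv⟩ := hnew
  obtain ⟨s, hs, rfl⟩ := exists_adj_of_mem_edgeSet he ht
  rcases h.eq_or_eq_or_eq_of_adj hu hv htuv hs with rfl | rfl | rfl <;> simp

theorem exists_card_le_four_conflicts (hreg : ∀ a, G.degree a = 3) :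
    ∃ E : Finset (Sym2 V), #E ≤ 4 ∧ ∀ ⦃e₁⦄, e₁ ∈ G.edgeSet → x ∈ e₁ →
      (∃ a ∈ e₁, a ∈ ({u, v} : Set V)) → ∀ ⦃e₂⦄, e₂ ∈ G.edgeSet →
      (∀ a ∈ e₂, a ∉ ({u, v} : Set V)) → (∀ a ∈ e₁, a ∉ e₂) →
      (∃ a ∈ e₁, ∃ b ∈ e₂, G.Adj a b) → e₂ ∈ E := by
  classical
  obtain ⟨x', hxx', hx'⟩ := exists_adj_eq_or_eq_or_eq_of_degree_eq_three (hreg x) h.u_ne_v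
    h.adj_xu h.adj_xv
  obtain ⟨y', -, hy'⟩ := exists_adj_eq_or_eq_or_eq_of_degree_eq_three (hreg y) h.u_ne_v
    h.adj_yu h.adj_yv
  obtain ⟨z', -, hz'⟩ := exists_adj_eq_or_eq_or_eq_of_degree_eq_three (hreg z) h.u_ne_v
    h.adj_zu h.adj_zv
  obtain ⟨r₁, r₂, hr⟩ := exists_eq_or_eq_of_degree_eq_three (hreg x') hxx'.symm
  refine ⟨{s(y, y'), s(z, z'), s(x', r₁), s(x', r₂)}, card_le_four, ?_⟩
  intro e₁ he₁ hx hnew e₂ he₂ hold hdisj ⟨a, ha, b, hb, hab⟩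
  have hu : u ∉ e₂ := fun hu => hold u hu (by simp)
  have hv : v ∉ e₂ := fun hv => hold v hv (by simp)
  obtain ⟨t, ht, htuv⟩ := hnew
  have hxt : x ≠ t := by rcases htuv with rfl | rfl; exacts [h.adj_xu.ne, h.adj_xv.ne]
  obtain rfl := (Sym2.mem_and_mem_iff hxt).mp ⟨hx, ht⟩
  rcases Sym2.mem_iff.mp ha with rfl | rfl
  · obtain rfl : b = x' := by
      rcases hx' b hab with rfl | rfl | rfl
      exacts [absurd hb hu, absurd hb hv, rfl]
    rcases eq_or_eq_of_mem_edgeSet hr he₂ hb (hdisj a (by simp)) with rfl | rfl <;> simp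
  · rcases h.eq_or_eq_or_eq_of_adj (hreg u) (hreg v) htuv hab with rfl | rfl | rfl
    · exact absurd hb (hdisj b (by simp))
    · rcases eq_or_eq_of_mem_edgeSet hy' he₂ hb hu with rfl | rfl
      exacts [absurd (by simp) hv, by simp]
    · rcases eq_or_eq_of_mem_edgeSet hz' he₂ hb hu with rfl | rfl
      exacts [absurd (by simp) hv, by simp]

end IsK23

end

/-- Deleting the 3-side-neighbors part `{u,v}` of a copy of `K_{2,3}` in a 3-regular
triangle-free graph: if `H - {u,v}` has an injective edge-coloring with 7 colors,
then so does `H`. -/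
theorem extend_coloring_K23 {V : Type*} [Fintype V] (H : SimpleGraph V)
    [DecidableRel H.Adj] (hreg : ∀ a : V, H.degree a = 3) (htf : H.CliqueFree 3)
    (x y z u v : V) (hxy : x ≠ y) (hxz : x ≠ z) (hyz : y ≠ z) (huv : u ≠ v)
    (hxu : H.Adj x u) (hxv : H.Adj x v) (hyu : H.Adj y u) (hyv : H.Adj y v)
    (hzu : H.Adj z u) (hzv : H.Adj z v)
    (hcol : ∃ f : Sym2 (({u, v}ᶜ : Set V)) → Fin 7,
      IsInjEdgeColoring (H.induce ({u, v}ᶜ : Set V)) f) :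
    ∃ f : Sym2 V → Fin 7, IsInjEdgeColoring H f := by
  classical
  obtain ⟨f, hF⟩ := hcol
  obtain ⟨F, rfl⟩ := (Sym2.map.injective Subtype.val_injective).surjective_comp_right f
  have hK : IsK23 H x y z u v := ⟨hxy, hxz, hyz, huv, hxu, hxv, hyu, hyv, hzu, hzv⟩
  obtain ⟨Ex, hEx, hconfx⟩ := hK.exists_card_le_four_conflicts hreg
  obtain ⟨Ey, hEy, hconfy⟩ := hK.swap.exists_card_le_four_conflicts hreg
  obtain ⟨Ez, hEz, hconfz⟩ := hK.rotate.exists_card_le_four_conflicts hreg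
  obtain ⟨a, b, c, ha, hb, hc, hab, hac, hbc⟩ := exists_three_distinct_notMem
    (A := Ex.image F) (B := Ey.image F) (C := Ez.image F)
    (by grind [card_image_le, Fintype.card_fin]) (by grind [card_image_le, Fintype.card_fin])
    (by grind [card_image_le, Fintype.card_fin])
  have hmeet := hK.mem_or_mem_or_mem_of_mem_edgeSet (hreg u) (hreg v)
  refine ⟨_, hF.extend_of_induce_compl htf
    (g := fun e => if x ∈ e then a else if y ∈ e then b else c) ?_ ?_⟩
  · intro e₁ he₁ e₂ he₂ h₁ h₂ hconf
    exact ite_mem_ne_ite_mem hab hac hbc (hmeet he₁ h₁) (hmeet he₂ h₂)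
      (hconf.disjoint_adj_of_cliqueFree htf).1
  · intro e₁ he₁ e₂ he₂ h₁ h₂ hconf
    obtain ⟨hdisj, hadj⟩ := hconf.disjoint_adj_of_cliqueFree htf
    have hxyz := hmeet he₁ h₁
    split_ifs with hx hy
    · exact fun h => ha (h ▸ mem_image_of_mem F (hconfx he₁ hx h₁ he₂ h₂ hdisj hadj))
    · exact fun h => hb (h ▸ mem_image_of_mem F (hconfy he₁ hy h₁ he₂ h₂ hdisj hadj))
    · exact fun h => hc (h ▸ mem_image_of_mem F (hconfz he₁ (by tauto) h₁ he₂ h₂ hdisj hadj))
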